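/- arXiv:2410.06434 — 3 statements merged into one kernel-verified Lean document; each statement's English description precedes it below -/
import Mathlib

section
/- Let 0 < s < 1 and 1 ≤ p with (2/3 + s)p < 1. Then the function g(x) = x^{-2/3} belongs to the fractional Sobolev space W^{s,p}(0,1), i.e. the Gagliardo seminorm ∫₀¹∫₀¹ |g(x) - g(y)|^p / |x - y|^{1 + sp} dx dy is finite. Consequently u(x) = x^{1/3} belongs to W^{1+s,p}(0,1). -/
/-!
For `0 < y < x` and `α, t ∈ [0, 1]`,
`y^{-α} - x^{-α} = y^{-α} (1 - (y/x)^α) ≤ y^{-α} (x - y)/x ≤ (x - y)^t y^{-α-t}`.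
Taking `t > s` with `(α + t) p < 1`, the Gagliardo integrand of `x^{-α}` is dominated by the
kernel `(x - y)^{(t-s)p-1} y^{-(α+t)p}` on `y < x` plus its reflection, and by Tonelli and
translation invariance the integral of this kernel over the square is at most
`∫₀¹ τ^{(t-s)p-1} dτ · ∫₀¹ y^{-(α+t)p} dy < ∞`.
-/

open MeasureTheory Set
open scoped ENNReal

lemma rpow_neg_sub_rpow_neg_le {α t x y : ℝ} (hα : α ≤ 1) (ht0 : 0 ≤ t) (ht1 : t ≤ 1)
    (hy : 0 < y) (hyx : y < x) :
    y ^ (-α) - x ^ (-α) ≤ (x - y) ^ t * y ^ (-α - t) := by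
  have hx : 0 < x := hy.trans hyx
  have hq0 : 0 < (x - y) / x := div_pos (sub_pos.2 hyx) hx
  have hq1 : (x - y) / x ≤ 1 := (div_le_one hx).2 (by linarith)
  have hyx1 : y / x ≤ 1 := (div_le_one hx).2 hyx.le
  calc y ^ (-α) - x ^ (-α) = y ^ (-α) * (1 - (y / x) ^ α) := by
        rw [Real.div_rpow hy.le hx.le, Real.rpow_neg hy.le, Real.rpow_neg hx.le]
        field_simp
    _ ≤ y ^ (-α) * (1 - y / x) := by
        gcongr
        simpa using Real.rpow_le_rpow_of_exponent_ge (div_pos hy hx) hyx1 hα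
    _ = y ^ (-α) * ((x - y) / x) ^ (1 : ℝ) := by
        rw [Real.rpow_one]; field_simp
    _ ≤ y ^ (-α) * ((x - y) / x) ^ t :=
        mul_le_mul_of_nonneg_left (Real.rpow_le_rpow_of_exponent_ge hq0 hq1 ht1)
          (Real.rpow_nonneg hy.le _)
    _ = y ^ (-α) * ((x - y) ^ t / x ^ t) := by rw [Real.div_rpow (sub_pos.2 hyx).le hx.le]
    _ ≤ y ^ (-α) * ((x - y) ^ t / y ^ t) := by gcongr
    _ = (x - y) ^ t * y ^ (-α - t) := by
        rw [Real.rpow_sub hy, Real.rpow_neg hy.le]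
        ring

lemma abs_rpow_neg_sub_pow_div_le {α s p t x y : ℝ} (hα0 : 0 ≤ α) (hα1 : α ≤ 1) (hp : 0 ≤ p)
    (ht0 : 0 ≤ t) (ht1 : t ≤ 1) (hy : 0 < y) (hyx : y < x) :
    |x ^ (-α) - y ^ (-α)| ^ p / |x - y| ^ (1 + s * p)
      ≤ (x - y) ^ ((t - s) * p - 1) * y ^ (-((α + t) * p)) := by
  have hxy : 0 < x - y := sub_pos.2 hyx
  have hmono : x ^ (-α) ≤ y ^ (-α) :=
    Real.rpow_le_rpow_of_nonpos hy hyx.le (neg_nonpos.2 hα0)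
  rw [abs_sub_comm, abs_of_nonneg (sub_nonneg.2 hmono), abs_of_pos hxy,
    div_le_iff₀ (Real.rpow_pos_of_pos hxy _)]
  calc (y ^ (-α) - x ^ (-α)) ^ p ≤ ((x - y) ^ t * y ^ (-α - t)) ^ p :=
        Real.rpow_le_rpow (sub_nonneg.2 hmono)
          (rpow_neg_sub_rpow_neg_le hα1 ht0 ht1 hy hyx) hp
    _ = (x - y) ^ ((t - s) * p - 1) * y ^ (-((α + t) * p)) * (x - y) ^ (1 + s * p) := by
        rw [Real.mul_rpow (Real.rpow_nonneg hxy.le _) (Real.rpow_nonneg hy.le _),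
          ← Real.rpow_mul hxy.le, ← Real.rpow_mul hy.le, mul_right_comm, ← Real.rpow_add hxy]
        ring_nf

noncomputable def powKernel (a b x y : ℝ) : ℝ≥0∞ :=
  if y < x then ENNReal.ofReal ((x - y) ^ (a - 1) * y ^ (-b)) else 0

lemma measurable_powKernel (a b : ℝ) : Measurable (Function.uncurry (powKernel a b)) :=
  Measurable.ite (measurableSet_lt measurable_snd measurable_fst) (by fun_prop) measurable_const

lemma powKernel_eq_mul (a b x y : ℝ) :
    powKernel a b x y
      = ENNReal.ofReal (y ^ (-b)) * if y < x then ENNReal.ofReal ((x - y) ^ (a - 1)) else 0 := by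
  unfold powKernel
  split_ifs with h
  · rw [ENNReal.ofReal_mul (Real.rpow_nonneg (sub_pos.2 h).le _), mul_comm]
  · rw [mul_zero]

lemma ofReal_abs_rpow_neg_sub_pow_div_le_powKernel {α s p t x y : ℝ} (hα0 : 0 ≤ α)
    (hα1 : α ≤ 1) (hp : 0 < p) (ht0 : 0 ≤ t) (ht1 : t ≤ 1) (hx : 0 < x) (hy : 0 < y) :
    ENNReal.ofReal (|x ^ (-α) - y ^ (-α)| ^ p / |x - y| ^ (1 + s * p))
      ≤ powKernel ((t - s) * p) ((α + t) * p) x y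
        + powKernel ((t - s) * p) ((α + t) * p) y x := by
  rcases lt_trichotomy y x with h | rfl | h
  · rw [powKernel, powKernel, if_pos h, if_neg h.not_gt, add_zero]
    exact ENNReal.ofReal_le_ofReal (abs_rpow_neg_sub_pow_div_le hα0 hα1 hp.le ht0 ht1 hy h)
  · simp [Real.zero_rpow hp.ne']
  · rw [powKernel, powKernel, if_neg h.not_gt, if_pos h, zero_add, abs_sub_comm,
      abs_sub_comm x]
    exact ENNReal.ofReal_le_ofReal (abs_rpow_neg_sub_pow_div_le hα0 hα1 hp.le ht0 ht1 hx h)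

lemma setLIntegral_Ioo_shift_le (f : ℝ → ℝ≥0∞) {y : ℝ} (hy : 0 ≤ y) :
    ∫⁻ x in Ioo 0 1, (if y < x then f (x - y) else 0) ≤ ∫⁻ τ in Ioo 0 1, f τ := by
  calc ∫⁻ x in Ioo 0 1, (if y < x then f (x - y) else 0)
      = ∫⁻ x, (Ioo 0 1).indicator (fun x => if y < x then f (x - y) else 0) x :=
        (lintegral_indicator measurableSet_Ioo _).symm
    _ ≤ ∫⁻ x, (Ioo 0 1).indicator f (x - y) := by
        refine lintegral_mono fun x => ?_
        by_cases hx : x ∈ Ioo (0 : ℝ) 1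
        · rw [indicator_of_mem hx]
          split_ifs with hyx
          · have hxy : x - y ∈ Ioo (0 : ℝ) 1 := ⟨sub_pos.2 hyx, by linarith [hx.2]⟩
            rw [indicator_of_mem hxy]
          · exact zero_le
        · simp [indicator_of_notMem hx]
    _ = ∫⁻ τ in Ioo 0 1, f τ := by
        rw [lintegral_sub_right_eq_self ((Ioo 0 1).indicator f) y,
          lintegral_indicator measurableSet_Ioo]

lemma lintegral_rpow_Ioo_lt_top {c : ℝ} (hc : -1 < c) :
    ∫⁻ τ in Ioo (0 : ℝ) 1, ENNReal.ofReal (τ ^ c) < ⊤ :=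
  ((intervalIntegral.integrableOn_Ioo_rpow_iff one_pos).2 hc).lintegral_lt_top

lemma lintegral_lintegral_powKernel_lt_top {a b : ℝ} (ha : 0 < a) (hb : b < 1) :
    ∫⁻ y in Ioo (0 : ℝ) 1, ∫⁻ x in Ioo (0 : ℝ) 1, powKernel a b x y < ⊤ := by
  have hC := lintegral_rpow_Ioo_lt_top (c := a - 1) (by linarith)
  calc ∫⁻ y in Ioo (0 : ℝ) 1, ∫⁻ x in Ioo (0 : ℝ) 1, powKernel a b x y
      ≤ ∫⁻ y in Ioo (0 : ℝ) 1,
          ENNReal.ofReal (y ^ (-b)) * ∫⁻ τ in Ioo (0 : ℝ) 1, ENNReal.ofReal (τ ^ (a - 1)) := by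
        refine setLIntegral_mono' measurableSet_Ioo fun y hy => ?_
        simp_rw [powKernel_eq_mul a b _ y]
        rw [lintegral_const_mul' _ _ ENNReal.ofReal_ne_top]
        exact mul_le_mul_right (setLIntegral_Ioo_shift_le _ hy.1.le) _
    _ = (∫⁻ y in Ioo (0 : ℝ) 1, ENNReal.ofReal (y ^ (-b)))
          * ∫⁻ τ in Ioo (0 : ℝ) 1, ENNReal.ofReal (τ ^ (a - 1)) :=
        lintegral_mul_const' _ _ hC.ne
    _ < ⊤ := ENNReal.mul_lt_top (lintegral_rpow_Ioo_lt_top (by linarith)) hC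

theorem lintegral_gagliardo_rpow_neg_lt_top {α s p : ℝ} (hα : 0 ≤ α) (hs : 0 ≤ s)
    (hp : 1 ≤ p) (hsp : (α + s) * p < 1) :
    ∫⁻ x in Ioo (0 : ℝ) 1, ∫⁻ y in Ioo (0 : ℝ) 1,
      ENNReal.ofReal (|x ^ (-α) - y ^ (-α)| ^ p / |x - y| ^ (1 + s * p)) < ⊤ := by
  have hp0 : 0 < p := by linarith
  have hp1 : 1 / p ≤ 1 := (div_le_one hp0).2 hp
  obtain ⟨t, hst, htp⟩ : ∃ t, s < t ∧ t < 1 / p - α :=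
    exists_between (by rw [lt_sub_iff_add_lt', lt_div_iff₀ hp0]; exact hsp)
  have hb : (α + t) * p < 1 := by rw [← lt_div_iff₀ hp0]; linarith
  have hα1 : α ≤ 1 := by linarith
  have ht1 : t ≤ 1 := by linarith
  set K := powKernel ((t - s) * p) ((α + t) * p)
  have hK := lintegral_lintegral_powKernel_lt_top (mul_pos (sub_pos.2 hst) hp0) hb
  calc ∫⁻ x in Ioo (0 : ℝ) 1, ∫⁻ y in Ioo (0 : ℝ) 1,
        ENNReal.ofReal (|x ^ (-α) - y ^ (-α)| ^ p / |x - y| ^ (1 + s * p))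
      ≤ ∫⁻ x in Ioo (0 : ℝ) 1, ∫⁻ y in Ioo (0 : ℝ) 1, (K x y + K y x) :=
        setLIntegral_mono' measurableSet_Ioo fun x hx => setLIntegral_mono' measurableSet_Ioo
          fun y hy => ofReal_abs_rpow_neg_sub_pow_div_le_powKernel hα hα1 hp0
            (hs.trans hst.le) ht1 hx.1 hy.1
    _ = (∫⁻ x in Ioo (0 : ℝ) 1, ∫⁻ y in Ioo (0 : ℝ) 1, K x y)
          + ∫⁻ x in Ioo (0 : ℝ) 1, ∫⁻ y in Ioo (0 : ℝ) 1, K y x := by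
        rw [← lintegral_add_left (measurable_powKernel _ _).lintegral_prod_right]
        refine lintegral_congr fun x => ?_
        exact lintegral_add_left ((measurable_powKernel _ _).comp measurable_prodMk_left) _
    _ < ⊤ := by
        rw [lintegral_lintegral_swap (measurable_powKernel _ _).aemeasurable]
        exact ENNReal.add_lt_top.2 ⟨hK, hK⟩

lemma memLp_rpow_Ioo {c p : ℝ} (hp : 0 < p) (hcp : -1 < c * p) :
    MemLp (fun x : ℝ => x ^ c) (ENNReal.ofReal p) (volume.restrict (Ioo 0 1)) := by
  rw [← integrable_norm_rpow_iff (by fun_prop) (by simpa using hp) ENNReal.ofReal_ne_top,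
    ENNReal.toReal_ofReal hp.le]
  refine ((intervalIntegral.integrableOn_Ioo_rpow_iff one_pos).2 hcp).congr_fun
    (fun x hx => ?_) measurableSet_Ioo
  rw [Real.norm_of_nonneg (Real.rpow_nonneg hx.1.le _), ← Real.rpow_mul hx.1.le]

theorem stmt_2_general (s p : ℝ) (hs : 0 < s) (hp : 1 ≤ p)
    (hsp : (2/3 + s) * p < 1) :
    let g : ℝ → ℝ := fun x => x ^ (-(2:ℝ)/3)
    let u : ℝ → ℝ := fun x => x ^ ((1:ℝ)/3)
    (∫⁻ x in Ioo (0:ℝ) 1, ∫⁻ y in Ioo (0:ℝ) 1,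
        ENNReal.ofReal (|g x - g y| ^ p / |x - y| ^ (1 + s * p))) < ⊤ ∧
    MemLp g (ENNReal.ofReal p) (volume.restrict (Ioo (0:ℝ) 1)) ∧
    MemLp u (ENNReal.ofReal p) (volume.restrict (Ioo (0:ℝ) 1)) := by
  intro g u
  have hp0 : 0 < p := by linarith
  refine ⟨?_, memLp_rpow_Ioo hp0 (by nlinarith), memLp_rpow_Ioo hp0 (by linarith)⟩
  simp only [g, neg_div]
  exact lintegral_gagliardo_rpow_neg_lt_top (by norm_num) hs.le hp hsp

/-- For `0 < s < 1`, `1 ≤ p` with `(2/3 + s)p < 1`, the function `g(x) = x^{-2/3}`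
has finite Gagliardo `W^{s,p}(0,1)` seminorm (and lies in `L^p(0,1)`); consequently
`u(x) = x^{1/3}` belongs to `W^{1+s,p}(0,1)` (i.e. `u ∈ L^p` and `u' ∈ W^{s,p}`). -/
theorem stmt_2 (s p : ℝ) (hs : 0 < s) (hs1 : s < 1) (hp : 1 ≤ p)
    (hsp : (2/3 + s) * p < 1) :
    let g : ℝ → ℝ := fun x => x ^ (-(2:ℝ)/3)
    let u : ℝ → ℝ := fun x => x ^ ((1:ℝ)/3)
    (∫⁻ x in Ioo (0:ℝ) 1, ∫⁻ y in Ioo (0:ℝ) 1,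
        ENNReal.ofReal (|g x - g y| ^ p / |x - y| ^ (1 + s * p))) < ⊤ ∧
    MemLp g (ENNReal.ofReal p) (volume.restrict (Ioo (0:ℝ) 1)) ∧
    MemLp u (ENNReal.ofReal p) (volume.restrict (Ioo (0:ℝ) 1)) :=
  stmt_2_general s p hs hp hsp
end

section
/- Let 0 < s < 1, 1 ≤ p < ∞ with sp < 1, and let v_h be a continuous piecewise linear function on the uniform mesh of size h on [0,1]. Then [v_h']_{W^{s,p}(0,1)} ≤ C h^{-s} ‖v_h‖_{W^{1,p}(0,1)}, so in particular v_h ∈ W^{1+s,p}(0,1). -/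
/-!
On each cell `K` of the mesh, `v_h'` is a constant `c_K`, so `|v_h'(x) - v_h'(y)|^p` vanishes when
`x` and `y` lie in the same cell and is at most `2^(p-1) (|c_K|^p + |c_L|^p)` when `x ∈ K`,
`y ∈ L ≠ K`. Symmetrizing, the Gagliardo seminorm (with `q = sp`) is at most
`2^p ∑_K |c_K|^p P_q(K)`, where `P_q(K) = ∫_K ∫_{Kᶜ} |x - y|^(-1-q)` is the fractional perimeter of
`K`. For an interval of length `h` it equals `2 h^(1-q) / (q (1-q))`, which is finite exactly
because `q < 1`, and `h |c_K|^p = ∫_K |v_h'|^p`; summing over the cells gives the bound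
`2^(p+1) / (q (1-q)) · h^(-sp) · ‖v_h'‖_{L^p}^p`.
-/

open MeasureTheory Set Function

open scoped ENNReal

theorem ENNReal.ofReal_abs_sub_rpow_le {p : ℝ} (hp : 1 ≤ p) (a b : ℝ) :
    ENNReal.ofReal (|a - b| ^ p)
      ≤ 2 ^ (p - 1) * (ENNReal.ofReal (|a| ^ p) + ENNReal.ofReal (|b| ^ p)) := by
  have hreal : |a - b| ^ p ≤ 2 ^ (p - 1) * (|a| ^ p + |b| ^ p) :=
    calc |a - b| ^ p ≤ (|a| + |b|) ^ p :=
          Real.rpow_le_rpow (abs_nonneg _) (abs_sub _ _) (by linarith)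
      _ ≤ 2 ^ (p - 1) * (|a| ^ p + |b| ^ p) := by
          lift |a| to NNReal using abs_nonneg a with u
          lift |b| to NNReal using abs_nonneg b with v
          exact_mod_cast NNReal.rpow_add_le_mul_rpow_add_rpow u v hp
  rw [← ENNReal.ofReal_ofNat 2, ENNReal.ofReal_rpow_of_pos two_pos,
    ← ENNReal.ofReal_add (by positivity) (by positivity), ← ENNReal.ofReal_mul (by positivity)]
  exact ENNReal.ofReal_le_ofReal hreal

section FracPerimeter

variable {q : ℝ}

theorem lintegral_Ici_inv_rpow (hq : 0 < q) {d : ℝ} (hd : 0 < d) :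
    ∫⁻ t in Ici d, ENNReal.ofReal ((t ^ (1 + q))⁻¹) = ENNReal.ofReal (d ^ (-q) / q) := by
  have hexp : -(1 + q) < -1 := by linarith
  rw [← Measure.restrict_congr_set Ioi_ae_eq_Ici,
    setLIntegral_congr_fun measurableSet_Ioi fun t (ht : d < t) =>
      by rw [← Real.rpow_neg (hd.trans ht).le],
    ← ofReal_integral_eq_lintegral_ofReal (integrableOn_Ioi_rpow_of_lt hexp hd)
      (ae_restrict_of_forall_mem measurableSet_Ioi fun t ht =>
        Real.rpow_nonneg (hd.trans (mem_Ioi.1 ht)).le _),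
    integral_Ioi_rpow_of_lt hexp hd]
  congr 1
  rw [show -(1 + q) + 1 = -q by ring, neg_div_neg_eq]

theorem lintegral_Iic_inv_abs_sub_rpow (hq : 0 < q) {a x : ℝ} (hax : a < x) :
    ∫⁻ y in Iic a, ENNReal.ofReal ((|x - y| ^ (1 + q))⁻¹)
      = ENNReal.ofReal ((x - a) ^ (-q) / q) := by
  have hsub := (Measure.measurePreserving_sub_left volume x).setLIntegral_comp_preimage_emb
    (MeasurableEquiv.subLeft x).measurableEmbedding (fun t => ENNReal.ofReal ((t ^ (1 + q))⁻¹))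
    (Ici (x - a))
  rw [show (fun y => x - y) ⁻¹' Ici (x - a) = Iic a by ext; simp] at hsub
  rw [← lintegral_Ici_inv_rpow hq (sub_pos.2 hax), ← hsub]
  refine setLIntegral_congr_fun measurableSet_Iic fun y (hy : y ≤ a) => ?_
  rw [abs_of_nonneg (by linarith)]

theorem lintegral_Ici_inv_abs_sub_rpow (hq : 0 < q) {b x : ℝ} (hxb : x < b) :
    ∫⁻ y in Ici b, ENNReal.ofReal ((|x - y| ^ (1 + q))⁻¹)
      = ENNReal.ofReal ((b - x) ^ (-q) / q) := by
  have hsub := (measurePreserving_sub_right volume x).setLIntegral_comp_preimage_emb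
    (MeasurableEquiv.subRight x).measurableEmbedding (fun t => ENNReal.ofReal ((t ^ (1 + q))⁻¹))
    (Ici (b - x))
  rw [show (fun y => y - x) ⁻¹' Ici (b - x) = Ici b by ext; simp] at hsub
  rw [← lintegral_Ici_inv_rpow hq (sub_pos.2 hxb), ← hsub]
  refine setLIntegral_congr_fun measurableSet_Ici fun y (hy : b ≤ y) => ?_
  rw [abs_sub_comm, abs_of_nonneg (by linarith)]

theorem lintegral_Ioo_rpow_sub_right (hq : q < 1) {a b : ℝ} (hab : a ≤ b) :
    ∫⁻ x in Ioo a b, ENNReal.ofReal ((x - a) ^ (-q))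
      = ENNReal.ofReal ((b - a) ^ (1 - q) / (1 - q)) := by
  have hint : IntervalIntegrable (fun x => (x - a) ^ (-q)) volume a b := by
    simpa using ((intervalIntegral.intervalIntegrable_rpow' (r := -q) (by linarith)).comp_sub_right
      (a := 0) (b := b - a) a)
  have hval : ∫ x in a..b, (x - a) ^ (-q) = (b - a) ^ (1 - q) / (1 - q) := by
    rw [intervalIntegral.integral_comp_sub_right (fun t => t ^ (-q)) a,
      integral_rpow (Or.inl (by linarith)), sub_self,
      Real.zero_rpow (by linarith : (0:ℝ) < -q + 1).ne', sub_zero,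
      neg_add_eq_sub]
  rw [Measure.restrict_congr_set Ioo_ae_eq_Ioc, ← hval, intervalIntegral.integral_of_le hab]
  exact (ofReal_integral_eq_lintegral_ofReal
    ((intervalIntegrable_iff_integrableOn_Ioc_of_le hab).1 hint)
    (ae_restrict_of_forall_mem measurableSet_Ioc fun x hx =>
      Real.rpow_nonneg (by linarith [hx.1]) _)).symm

theorem lintegral_Ioo_rpow_sub_left (hq : q < 1) {a b : ℝ} (hab : a ≤ b) :
    ∫⁻ x in Ioo a b, ENNReal.ofReal ((b - x) ^ (-q))
      = ENNReal.ofReal ((b - a) ^ (1 - q) / (1 - q)) := by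
  have hint : IntervalIntegrable (fun x => (b - x) ^ (-q)) volume a b := by
    simpa using ((intervalIntegral.intervalIntegrable_rpow' (r := -q) (by linarith)).comp_sub_left
      (a := b - a) (b := 0) b)
  have hval : ∫ x in a..b, (b - x) ^ (-q) = (b - a) ^ (1 - q) / (1 - q) := by
    rw [intervalIntegral.integral_comp_sub_left (fun t => t ^ (-q)) b,
      integral_rpow (Or.inl (by linarith)), sub_self,
      Real.zero_rpow (by linarith : (0:ℝ) < -q + 1).ne', sub_zero,
      neg_add_eq_sub]
  rw [Measure.restrict_congr_set Ioo_ae_eq_Ioc, ← hval, intervalIntegral.integral_of_le hab]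
  exact (ofReal_integral_eq_lintegral_ofReal
    ((intervalIntegrable_iff_integrableOn_Ioc_of_le hab).1 hint)
    (ae_restrict_of_forall_mem measurableSet_Ioc fun x hx =>
      Real.rpow_nonneg (by linarith [hx.2]) _)).symm

theorem compl_Ioo_eq_Iic_union_Ici {α : Type*} [LinearOrder α] {a b : α} :
    (Ioo a b)ᶜ = Iic a ∪ Ici b := by
  ext x; simp [or_iff_not_imp_left]

noncomputable def fracPerimeter (q : ℝ) (E : Set ℝ) : ℝ≥0∞ :=
  ∫⁻ x in E, ∫⁻ y in Eᶜ, ENNReal.ofReal ((|x - y| ^ (1 + q))⁻¹)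

theorem fracPerimeter_Ioo (hq0 : 0 < q) (hq1 : q < 1) {a b : ℝ} (hab : a < b) :
    fracPerimeter q (Ioo a b) = ENNReal.ofReal (2 * (b - a) ^ (1 - q) / (q * (1 - q))) := by
  have hinner : ∀ x ∈ Ioo a b, ∫⁻ y in (Ioo a b)ᶜ, ENNReal.ofReal ((|x - y| ^ (1 + q))⁻¹)
      = ENNReal.ofReal q⁻¹
          * (ENNReal.ofReal ((x - a) ^ (-q)) + ENNReal.ofReal ((b - x) ^ (-q))) := by
    rintro x ⟨hax, hxb⟩
    rw [compl_Ioo_eq_Iic_union_Ici,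
      lintegral_union measurableSet_Ici (Iic_disjoint_Ici.2 hab.not_ge),
      lintegral_Iic_inv_abs_sub_rpow hq0 hax, lintegral_Ici_inv_abs_sub_rpow hq0 hxb, mul_add,
      ← ENNReal.ofReal_mul (by positivity), ← ENNReal.ofReal_mul (by positivity),
      inv_mul_eq_div, inv_mul_eq_div]
  have hmeas : Measurable fun x : ℝ => ENNReal.ofReal ((x - a) ^ (-q)) := by fun_prop
  rw [fracPerimeter, setLIntegral_congr_fun measurableSet_Ioo hinner, lintegral_const_mul' _ _
    ENNReal.ofReal_ne_top, lintegral_add_left hmeas, lintegral_Ioo_rpow_sub_right hq1 hab.le,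
    lintegral_Ioo_rpow_sub_left hq1 hab.le, ← ENNReal.ofReal_add (by positivity) (by positivity),
    ← ENNReal.ofReal_mul (by positivity)]
  congr 1
  field_simp
  ring

end FracPerimeter

theorem lintegral_lintegral_le_two_mul_of_le_add_swap {α : Type*} [MeasurableSpace α]
    {μ : Measure α} [SFinite μ] {U : Set α} {F : α → α → ℝ≥0∞} {G : α × α → ℝ≥0∞}
    (hG : Measurable G)
    (hFG : ∀ᵐ x ∂μ.restrict U, ∀ᵐ y ∂μ.restrict U, F x y ≤ G (x, y) + G (y, x)) :
    ∫⁻ x in U, ∫⁻ y in U, F x y ∂μ ∂μ ≤ 2 * ∫⁻ z, G z ∂μ.prod μ :=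
  calc ∫⁻ x in U, ∫⁻ y in U, F x y ∂μ ∂μ
        ≤ ∫⁻ x in U, ∫⁻ y in U, G (x, y) + G (x, y).swap ∂μ ∂μ :=
        lintegral_mono_ae <| hFG.mono fun _ hx => lintegral_mono_ae hx
    _ ≤ ∫⁻ x, ∫⁻ y, G (x, y) + G (x, y).swap ∂μ ∂μ :=
        (setLIntegral_le_lintegral _ _).trans (lintegral_mono fun _ => setLIntegral_le_lintegral _ _)
    _ = ∫⁻ z, G z + G z.swap ∂μ.prod μ :=
        (lintegral_prod _ (hG.add (hG.comp measurable_swap)).aemeasurable).symm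
    _ = 2 * ∫⁻ z, G z ∂μ.prod μ := by
        rw [lintegral_add_left hG, lintegral_prod_swap, two_mul]

theorem lintegral_indicator_prod_compl_eq_fracPerimeter {E : Set ℝ} (hE : MeasurableSet E)
    (q : ℝ) :
    ∫⁻ z, (E ×ˢ Eᶜ).indicator (fun z => ENNReal.ofReal ((|z.1 - z.2| ^ (1 + q))⁻¹)) z
        ∂volume.prod volume = fracPerimeter q E := by
  rw [lintegral_indicator (hE.prod hE.compl), setLIntegral_prod _ (by fun_prop), fracPerimeter]

theorem lintegral_lintegral_rpow_div_le_fracPerimeter {ι : Type*} {s : Finset ι} {E : ι → Set ℝ}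
    {c : ι → ℝ} {g : ℝ → ℝ} {U : Set ℝ} {p q : ℝ} (hp : 1 ≤ p)
    (hE : ∀ i ∈ s, MeasurableSet (E i)) (hdisj : (s : Set ι).PairwiseDisjoint E)
    (hgE : ∀ i ∈ s, ∀ x ∈ E i, g x = c i) (hcover : ∀ᵐ x ∂volume.restrict U, ∃ i ∈ s, x ∈ E i) :
    ∫⁻ x in U, ∫⁻ y in U, ENNReal.ofReal (|g x - g y| ^ p / |x - y| ^ (1 + q))
      ≤ 2 ^ p * ∑ i ∈ s, ENNReal.ofReal (|c i| ^ p) * fracPerimeter q (E i) := by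
  set k : ℝ × ℝ → ℝ≥0∞ := fun z => ENNReal.ofReal ((|z.1 - z.2| ^ (1 + q))⁻¹)
  set G : ℝ × ℝ → ℝ≥0∞ := fun z =>
    2 ^ (p - 1) * ∑ i ∈ s, ENNReal.ofReal (|c i| ^ p) * (E i ×ˢ (E i)ᶜ).indicator k z
  have hind : ∀ i ∈ s, Measurable ((E i ×ˢ (E i)ᶜ).indicator k) := fun i hi =>
    (by fun_prop : Measurable k).indicator ((hE i hi).prod (hE i hi).compl)
  have hterm : ∀ i ∈ s,
      Measurable fun z => ENNReal.ofReal (|c i| ^ p) * (E i ×ˢ (E i)ᶜ).indicator k z :=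
    fun i hi => (hind i hi).const_mul _
  have hG_ge : ∀ i ∈ s, ∀ x ∈ E i, ∀ y ∉ E i,
      2 ^ (p - 1) * (ENNReal.ofReal (|c i| ^ p) * k (x, y)) ≤ G (x, y) := fun i hi x hx y hy => by
    have := Finset.single_le_sum (f := fun i => ENNReal.ofReal (|c i| ^ p)
      * (E i ×ˢ (E i)ᶜ).indicator k (x, y)) (fun _ _ => zero_le) hi
    rw [indicator_of_mem (mk_mem_prod hx hy)] at this
    exact mul_le_mul_right this _
  have hpoint : ∀ i ∈ s, ∀ j ∈ s, ∀ x ∈ E i, ∀ y ∈ E j,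
      ENNReal.ofReal (|g x - g y| ^ p / |x - y| ^ (1 + q)) ≤ G (x, y) + G (y, x) := by
    intro i hi j hj x hx y hy
    rw [hgE i hi x hx, hgE j hj y hy]
    obtain rfl | hij := eq_or_ne i j
    · simp [Real.zero_rpow (by linarith : p ≠ 0)]
    calc ENNReal.ofReal (|c i - c j| ^ p / |x - y| ^ (1 + q))
        = ENNReal.ofReal (|c i - c j| ^ p) * k (x, y) := by
          rw [div_eq_mul_inv, ENNReal.ofReal_mul (by positivity)]
      _ ≤ 2 ^ (p - 1) * (ENNReal.ofReal (|c i| ^ p) + ENNReal.ofReal (|c j| ^ p)) * k (x, y) := by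
          gcongr; exact ENNReal.ofReal_abs_sub_rpow_le hp _ _
      _ = 2 ^ (p - 1) * (ENNReal.ofReal (|c i| ^ p) * k (x, y))
            + 2 ^ (p - 1) * (ENNReal.ofReal (|c j| ^ p) * k (y, x)) := by
          simp only [k, abs_sub_comm y x]
          ring
      _ ≤ G (x, y) + G (y, x) :=
          add_le_add (hG_ge i hi x hx y ((hdisj hi hj hij).notMem_of_mem_right hy))
            (hG_ge j hj y hy x ((hdisj hi hj hij).notMem_of_mem_left hx))
  have h2 : (2 : ℝ≥0∞) ^ p = 2 * 2 ^ (p - 1) := by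
    conv_lhs => rw [← sub_add_cancel p 1]
    rw [ENNReal.rpow_add _ _ two_ne_zero ENNReal.ofNat_ne_top, ENNReal.rpow_one, mul_comm]
  calc ∫⁻ x in U, ∫⁻ y in U, ENNReal.ofReal (|g x - g y| ^ p / |x - y| ^ (1 + q))
      ≤ 2 * ∫⁻ z, G z ∂volume.prod volume :=
        lintegral_lintegral_le_two_mul_of_le_add_swap ((Finset.measurable_sum _ hterm).const_mul _)
          (hcover.mono fun x ⟨i, hi, hx⟩ => hcover.mono fun y ⟨j, hj, hy⟩ =>
            hpoint i hi j hj x hx y hy)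
    _ = 2 ^ p * ∑ i ∈ s, ENNReal.ofReal (|c i| ^ p) * fracPerimeter q (E i) := by
        rw [lintegral_const_mul _ (Finset.measurable_sum _ hterm),
          lintegral_finsetSum' _ fun i hi => (hterm i hi).aemeasurable, h2, mul_assoc]
        congr 2
        refine Finset.sum_congr rfl fun i hi => ?_
        rw [lintegral_const_mul _ (hind i hi),
          lintegral_indicator_prod_compl_eq_fracPerimeter (hE i hi)]

theorem sum_mul_measure_le_setLIntegral {α ι : Type*} [MeasurableSpace α] {μ : Measure α}
    {s : Finset ι} {E : ι → Set α} {U : Set α} {F : α → ℝ≥0∞} {w : ι → ℝ≥0∞}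
    (hE : ∀ i ∈ s, MeasurableSet (E i)) (hdisj : (s : Set ι).PairwiseDisjoint E)
    (hEU : ∀ i ∈ s, E i ⊆ U) (hF : ∀ i ∈ s, ∀ x ∈ E i, F x = w i) :
    ∑ i ∈ s, w i * μ (E i) ≤ ∫⁻ x in U, F x ∂μ :=
  calc ∑ i ∈ s, w i * μ (E i) = ∑ i ∈ s, ∫⁻ x in E i, F x ∂μ :=
        Finset.sum_congr rfl fun i hi => by
          rw [setLIntegral_congr_fun (hE i hi) (hF i hi), setLIntegral_const]
    _ = ∫⁻ x in ⋃ i ∈ s, E i, F x ∂μ := (lintegral_biUnion_finset hdisj hE F).symm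
    _ ≤ ∫⁻ x in U, F x ∂μ := lintegral_mono_set (iUnion₂_subset hEU)

theorem integrableOn_abs_rpow_of_eqOn_const {ι : Type*} {s : Finset ι} {E : ι → Set ℝ}
    {c : ι → ℝ} {g : ℝ → ℝ} {U : Set ℝ} {p : ℝ} (hp : 0 ≤ p) (hg : Measurable g)
    (hU : volume U ≠ ∞) (hgE : ∀ i ∈ s, ∀ x ∈ E i, g x = c i)
    (hcover : ∀ᵐ x ∂volume.restrict U, ∃ i ∈ s, x ∈ E i) :
    IntegrableOn (fun x => |g x| ^ p) U :=
  Measure.integrableOn_of_bounded (M := ∑ i ∈ s, |c i| ^ p) hU (by fun_prop) <|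
    hcover.mono fun x ⟨i, hi, hx⟩ => by
      rw [Real.norm_of_nonneg (by positivity), hgE i hi x hx]
      exact Finset.single_le_sum (f := fun j => |c j| ^ p) (fun j _ => by positivity) hi

theorem deriv_eq_of_eqOn_Icc_affine {v : ℝ → ℝ} {l r a b : ℝ}
    (hv : ∀ x ∈ Icc l r, v x = a * x + b) {x : ℝ} (hx : x ∈ Ioo l r) : deriv v x = a := by
  have hloc : v =ᶠ[nhds x] fun t => a * t + b :=
    Filter.eventually_of_mem (Ioo_mem_nhds hx.1 hx.2) fun t ht => hv t (Ioo_subset_Icc_self ht)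
  rw [hloc.deriv_eq]
  simp

section UniformMesh

variable {N : ℕ} {h : ℝ}

theorem pairwise_disjoint_Ioo_natCast_mul (hh : 0 ≤ h) :
    Pairwise (Disjoint on fun k : ℕ => Ioo ((k : ℝ) * h) ((k + 1) * h)) := by
  have hmono : Monotone fun k : ℕ => (k : ℝ) * h := fun k l hkl => by dsimp only; gcongr
  simpa using hmono.pairwise_disjoint_on_Ioo_succ

theorem Ioo_natCast_mul_subset_Ioo (hh : 0 ≤ h) (hNh : N * h = 1) {k : ℕ} (hk : k < N) :
    Ioo ((k : ℝ) * h) ((k + 1) * h) ⊆ Ioo 0 1 := by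
  have hkN : (k : ℝ) + 1 ≤ N := by exact_mod_cast hk
  refine Ioo_subset_Ioo (by positivity) ?_
  calc ((k : ℝ) + 1) * h ≤ N * h := by gcongr
    _ = 1 := hNh

theorem ae_restrict_Ioo_exists_mem_Ioo_natCast_mul (hh : 0 < h) (hNh : N * h = 1) :
    ∀ᵐ x ∂volume.restrict (Ioo (0 : ℝ) 1),
      ∃ k ∈ Finset.range N, x ∈ Ioo ((k : ℝ) * h) ((k + 1) * h) := by
  set cells := ⋃ k ∈ Finset.range N, Ioo ((k : ℝ) * h) ((k + 1) * h)
  have hmeas : MeasurableSet cells := Finset.measurableSet_biUnion _ fun _ _ => measurableSet_Ioo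
  have hvol : volume (Ioo (0 : ℝ) 1) ≤ volume cells := by
    rw [measure_biUnion_finset ((pairwise_disjoint_Ioo_natCast_mul hh.le).set_pairwise _)
      fun _ _ => measurableSet_Ioo]
    simp only [Real.volume_Ioo, add_mul, one_mul, add_sub_cancel_left, Finset.sum_const,
      Finset.card_range, nsmul_eq_mul, sub_zero]
    rw [← ENNReal.ofReal_natCast, ← ENNReal.ofReal_mul (Nat.cast_nonneg _), hNh]
  have hae : cells =ᵐ[volume] Ioo (0 : ℝ) 1 :=
    ae_eq_of_subset_of_measure_ge
      (iUnion₂_subset fun k hk => Ioo_natCast_mul_subset_Ioo hh.le hNh (Finset.mem_range.1 hk))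
      hvol hmeas.nullMeasurableSet measure_Ioo_lt_top.ne
  rw [← Measure.restrict_congr_set hae]
  filter_upwards [ae_restrict_mem hmeas] with x hx
  obtain ⟨k, hk, hxk⟩ := mem_iUnion₂.1 hx
  exact ⟨k, hk, hxk⟩

end UniformMesh

theorem lintegral_lintegral_le_of_uniform_mesh {g : ℝ → ℝ} {c : ℕ → ℝ} {N : ℕ} {h p q : ℝ}
    (hp : 1 ≤ p) (hq0 : 0 < q) (hq1 : q < 1) (hh : 0 < h) (hNh : N * h = 1)
    (hg : ∀ k ∈ Finset.range N, ∀ x ∈ Ioo ((k : ℝ) * h) ((k + 1) * h), g x = c k) :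
    ∫⁻ x in Ioo (0 : ℝ) 1, ∫⁻ y in Ioo (0 : ℝ) 1,
        ENNReal.ofReal (|g x - g y| ^ p / |x - y| ^ (1 + q))
      ≤ ENNReal.ofReal (2 ^ (p + 1) / (q * (1 - q)) * h ^ (-q))
          * ∫⁻ x in Ioo (0 : ℝ) 1, ENNReal.ofReal (|g x| ^ p) := by
  have hdisj := (pairwise_disjoint_Ioo_natCast_mul hh.le).set_pairwise (Finset.range N : Set ℕ)
  have hcell : ∀ k : ℕ, (k + 1) * h - k * h = h := fun k => by ring
  calc _ ≤ 2 ^ p * ∑ k ∈ Finset.range N,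
          ENNReal.ofReal (|c k| ^ p) * fracPerimeter q (Ioo ((k : ℝ) * h) ((k + 1) * h)) :=
        lintegral_lintegral_rpow_div_le_fracPerimeter hp (fun _ _ => measurableSet_Ioo) hdisj hg
          (ae_restrict_Ioo_exists_mem_Ioo_natCast_mul hh hNh)
    _ = ENNReal.ofReal (2 ^ (p + 1) / (q * (1 - q)) * h ^ (-q)) * ∑ k ∈ Finset.range N,
          ENNReal.ofReal (|c k| ^ p) * volume (Ioo ((k : ℝ) * h) ((k + 1) * h)) := by
        rw [Finset.mul_sum, Finset.mul_sum]
        refine Finset.sum_congr rfl fun k _ => ?_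
        rw [fracPerimeter_Ioo hq0 hq1 (by linarith [hcell k]), Real.volume_Ioo, hcell,
          ← ENNReal.ofReal_ofNat 2, ENNReal.ofReal_rpow_of_pos two_pos,
          ← ENNReal.ofReal_mul (by positivity), ← ENNReal.ofReal_mul (by positivity),
          ← ENNReal.ofReal_mul (by positivity), ← ENNReal.ofReal_mul (by positivity),
          Real.rpow_add_one two_ne_zero, sub_eq_neg_add, Real.rpow_add_one hh.ne']
        ring_nf
    _ ≤ _ := by
        gcongr
        exact sum_mul_measure_le_setLIntegral (fun _ _ => measurableSet_Ioo) hdisj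
          (fun k hk => Ioo_natCast_mul_subset_Ioo hh.le hNh (Finset.mem_range.1 hk))
          fun k hk x hx => by rw [hg k hk x hx]

theorem stmt_8_general (s p : ℝ) (hs : 0 < s) (hp : 1 ≤ p) (hsp : s * p < 1) :
    ∃ C > 0, ∀ (N : ℕ) (h : ℝ) (v : ℝ → ℝ), 0 < N → h = 1 / (N : ℝ) →
      ContinuousOn v (Icc 0 1) →
      (∀ k : ℕ, k < N → ∃ a b : ℝ,
        ∀ x ∈ Icc ((k : ℝ) * h) (((k : ℝ) + 1) * h), v x = a * x + b) →
      (∫⁻ x in Ioo (0:ℝ) 1, ∫⁻ y in Ioo (0:ℝ) 1,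
          ENNReal.ofReal (|deriv v x - deriv v y| ^ p / |x - y| ^ (1 + s * p)))
        ≤ ENNReal.ofReal ((C * h ^ (-s)) ^ p *
            ∫ x in Ioo (0:ℝ) 1, (|v x| ^ p + |deriv v x| ^ p)) := by
  have hp0 : 0 < p := by linarith
  have hq0 : 0 < s * p := mul_pos hs hp0
  have hq1 : 0 < 1 - s * p := sub_pos.2 hsp
  refine ⟨(2 ^ (p + 1) / (s * p * (1 - s * p))) ^ p⁻¹, by positivity, ?_⟩
  intro N h v hN hhN hv hv_affine
  have hh : 0 < h := by rw [hhN]; positivity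
  have hNh : (N : ℝ) * h = 1 := by rw [hhN]; field_simp
  obtain ⟨a, hslope⟩ : ∃ a : ℕ → ℝ, ∀ k ∈ Finset.range N,
      ∀ x ∈ Ioo ((k : ℝ) * h) ((k + 1) * h), deriv v x = a k := by
    choose! a b hab using hv_affine
    exact ⟨a, fun k hk x hx => deriv_eq_of_eqOn_Icc_affine (hab k (Finset.mem_range.1 hk)) hx⟩
  have hint : IntegrableOn (fun x => |v x| ^ p + |deriv v x| ^ p) (Ioo 0 1) :=
    ((hv.abs.rpow_const fun _ _ => Or.inr hp0.le).integrableOn_Icc.mono_set Ioo_subset_Icc_self).add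
      (integrableOn_abs_rpow_of_eqOn_const hp0.le (measurable_deriv v) measure_Ioo_lt_top.ne hslope
        (ae_restrict_Ioo_exists_mem_Ioo_natCast_mul hh hNh))
  calc _ ≤ ENNReal.ofReal (2 ^ (p + 1) / (s * p * (1 - s * p)) * h ^ (-(s * p)))
          * ∫⁻ x in Ioo (0 : ℝ) 1, ENNReal.ofReal (|deriv v x| ^ p) :=
        lintegral_lintegral_le_of_uniform_mesh hp hq0 hsp hh hNh hslope
    _ ≤ ENNReal.ofReal (2 ^ (p + 1) / (s * p * (1 - s * p)) * h ^ (-(s * p)))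
          * ENNReal.ofReal (∫ x in Ioo (0 : ℝ) 1, (|v x| ^ p + |deriv v x| ^ p)) := by
        rw [ofReal_integral_eq_lintegral_ofReal hint (ae_of_all _ fun _ => by positivity)]
        gcongr with x
        exact le_add_of_nonneg_left (by positivity)
    _ = _ := by
        rw [← ENNReal.ofReal_mul (by positivity), Real.mul_rpow (by positivity) (by positivity),
          Real.rpow_inv_rpow (by positivity) hp0.ne', ← Real.rpow_mul hh.le, neg_mul]

/-- Fractional inverse inequality for derivatives of continuous piecewise linear
functions on the uniform mesh of size `h = 1/N`: for `0 < s < 1`, `1 ≤ p < ∞` with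
`sp < 1`, one has `[v_h']_{W^{s,p}(0,1)}^p ≤ (C h^{-s})^p ‖v_h‖_{W^{1,p}(0,1)}^p`;
in particular the Gagliardo seminorm of `v_h'` is finite, i.e. `v_h ∈ W^{1+s,p}(0,1)`. -/
theorem stmt_8 (s p : ℝ) (hs : 0 < s) (hs1 : s < 1) (hp : 1 ≤ p) (hsp : s * p < 1) :
    ∃ C > 0, ∀ (N : ℕ) (h : ℝ) (v : ℝ → ℝ), 0 < N → h = 1 / (N : ℝ) →
      ContinuousOn v (Icc 0 1) →
      (∀ k : ℕ, k < N → ∃ a b : ℝ,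
        ∀ x ∈ Icc ((k : ℝ) * h) (((k : ℝ) + 1) * h), v x = a * x + b) →
      (∫⁻ x in Ioo (0:ℝ) 1, ∫⁻ y in Ioo (0:ℝ) 1,
          ENNReal.ofReal (|deriv v x - deriv v y| ^ p / |x - y| ^ (1 + s * p)))
        ≤ ENNReal.ofReal ((C * h ^ (-s)) ^ p *
            ∫ x in Ioo (0:ℝ) 1, (|v x| ^ p + |deriv v x| ^ p)) :=
  stmt_8_general s p hs hp hsp
end

section
/- Lemma (error in the zeroth-order factor): let 1 ≤ p < ∞, 0 < s < 1, v ∈ W^{1+s,p}(0,1) ∩ L^∞(0,1), and let K_h v satisfy ‖v - K_h v‖_{L^1(0,1)} ≤ C h^{1+s}[v]_{W^{1+s,p}(0,1)} and ‖K_h v‖_{L^∞} ≤ C‖v‖_{L^∞}. Then for 0 < α < (1+s)/6, ∫₀¹ (χ_h^α((K_h v)'(x)))^6 [ (K_h v(x)^3 - x)^2 - (v(x)^3 - x)^2 ] dx ≤ C h^{1+s-6α} (1 + ‖v‖_{L^∞(0,1)})^5 [v]_{W^{1+s,p}(0,1)}, and in particular this quantity tends to 0 as h → 0⁺. -/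
open MeasureTheory Set Filter

/-- The cutoff function `χ_h^α(t) = sgn(t) · min(|t|, h^{-α})`. -/
noncomputable def chiCut (h α t : ℝ) : ℝ := Real.sign t * min |t| (h ^ (-α))


lemma chiCut_abs_le (h α t : ℝ) (hh : 0 < h) : |chiCut h α t| ≤ h ^ (-α) := by
  have h0 : (0:ℝ) ≤ h ^ (-α) := Real.rpow_nonneg hh.le _
  have h1 : |Real.sign t| ≤ 1 := by
    rcases Real.sign_apply_eq t with h' | h' | h' <;> rw [h'] <;> norm_num
  calc |chiCut h α t| = |Real.sign t| * |min |t| (h ^ (-α))| := abs_mul _ _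
    _ ≤ 1 * (h ^ (-α)) := by
        apply mul_le_mul h1 _ (abs_nonneg _) zero_le_one
        rw [abs_of_nonneg (le_min (abs_nonneg _) h0)]
        exact min_le_right _ _
    _ = h ^ (-α) := one_mul _

lemma key_alg (C₀ M K v x : ℝ) (hM : 0 ≤ M) (hC₀ : 0 < C₀)
    (hx0 : 0 < x) (hx1 : x < 1) (hv : |v| ≤ M) (hK : |K| ≤ C₀ * M) :
    |(K^3 - x)^2 - (v^3 - x)^2| ≤ (C₀^3+3)*(C₀^2+C₀+1)*(1+M)^5 * |v - K| := by
  have e0 : |(K^3 - x)^2 - (v^3 - x)^2| = |K^3 + v^3 - 2*x| * |K^3 - v^3| := by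
    rw [← abs_mul]; ring_nf
  have e1 : |K^3 + v^3 - 2*x| ≤ (C₀*M)^3 + M^3 + 2 := by
    have a1 : |K^3 + v^3 - 2*x| ≤ |K^3 + v^3| + |2*x| := abs_sub _ _
    have a2 : |K^3 + v^3| ≤ |K| ^ 3 + |v| ^ 3 := by
      refine (abs_add_le _ _).trans ?_
      rw [abs_pow, abs_pow]
    have h2 : |2*x| ≤ 2 := by rw [abs_of_nonneg (by linarith)]; linarith
    have b1 : |K| ^ 3 ≤ (C₀*M)^3 := by gcongr <;> positivity
    have b2 : |v| ^ 3 ≤ M^3 := by gcongr <;> positivity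
    linarith
  have t1 : |K^2 + K*v + v^2| ≤ (C₀^2+C₀+1)*M^2 := by
    have a1 : |K^2 + K*v + v^2| ≤ |K^2 + K*v| + |v^2| := abs_add_le _ _
    have a2 : |K^2 + K*v| ≤ |K^2| + |K*v| := abs_add_le _ _
    have a3 : |K^2| = |K| ^ 2 := abs_pow K 2
    have a4 : |v^2| = |v| ^ 2 := abs_pow v 2
    have a5 : |K*v| = |K| * |v| := abs_mul K v
    have b1 : |K| ^ 2 ≤ (C₀*M)^2 := by gcongr <;> positivity
    have b2 : |v| ^ 2 ≤ M^2 := by gcongr <;> positivity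
    have b3 : |K| * |v| ≤ (C₀*M)*M :=
      mul_le_mul hK hv (abs_nonneg _) (by positivity)
    nlinarith
  have e2 : |K^3 - v^3| ≤ (C₀^2+C₀+1)*M^2 * |v - K| := by
    have heq : K^3 - v^3 = (K^2 + K*v + v^2) * (K - v) := by ring
    rw [heq, abs_mul, abs_sub_comm K v]
    exact mul_le_mul_of_nonneg_right t1 (abs_nonneg _)
  have h1 : (C₀*M)^3 + M^3 + 2 ≤ (C₀^3+3)*(1+M)^3 := by
    nlinarith [pow_nonneg hM 3, sq_nonneg M, pow_pos hC₀ 3, sq_nonneg (1+M),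
      mul_nonneg (pow_pos hC₀ 3).le (by nlinarith [pow_nonneg hM 3, sq_nonneg M] : (0:ℝ) ≤ (1+M)^3 - M^3)]
  have h2 : (C₀^2+C₀+1)*M^2 ≤ (C₀^2+C₀+1)*(1+M)^2 := by nlinarith [sq_nonneg C₀]
  have main : ((C₀*M)^3 + M^3 + 2) * ((C₀^2+C₀+1)*M^2) ≤ (C₀^3+3)*(C₀^2+C₀+1)*(1+M)^5 := by
    have := mul_le_mul h1 h2 (by positivity) (by positivity)
    nlinarith [this]
  rw [e0]
  have step : |K^3 + v^3 - 2*x| * |K^3 - v^3|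
      ≤ ((C₀*M)^3 + M^3 + 2) * ((C₀^2+C₀+1)*M^2 * |v - K|) :=
    mul_le_mul e1 e2 (abs_nonneg _) (by positivity)
  have : ((C₀*M)^3 + M^3 + 2) * ((C₀^2+C₀+1)*M^2 * |v - K|)
      = (((C₀*M)^3 + M^3 + 2) * ((C₀^2+C₀+1)*M^2)) * |v - K| := by ring
  rw [this] at step
  exact step.trans (mul_le_mul_of_nonneg_right main (abs_nonneg _))

/-- Error in the zeroth-order factor: if `v ∈ W^{1+s,p}(0,1) ∩ L^∞` (with `|v| ≤ M` and
Gagliardo seminorm `[v]_{W^{1+s,p}} = V`), and `K_h v` satisfies the `L¹` approximation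
bound `‖v - K_h v‖_{L¹} ≤ C₀ h^{1+s} V` and the uniform bound `‖K_h v‖_∞ ≤ C₀ M`, then
for `0 < α < (1+s)/6`,
`∫₀¹ (χ_h^α((K_h v)'))⁶ [(K_h v³ - x)² - (v³ - x)²] dx ≤ C h^{1+s-6α} (1+M)⁵ V`,
and in particular this quantity tends to `0` as `h → 0⁺`. -/
theorem stmt_12 (s p α C₀ : ℝ) (hs : 0 < s) (hs1 : s < 1) (hp : 1 ≤ p)
    (hα : 0 < α) (hα6 : α < (1 + s) / 6) (hC₀ : 0 < C₀) :
    ∃ C > 0, ∀ (v : ℝ → ℝ) (K : ℝ → ℝ → ℝ) (M V : ℝ),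
      Measurable v → (∀ h : ℝ, 0 < h → Measurable (K h)) →
      0 ≤ M → 0 ≤ V →
      (∀ x ∈ Ioo (0:ℝ) 1, |v x| ≤ M) →
      (∀ h : ℝ, 0 < h → ∀ x ∈ Ioo (0:ℝ) 1, |K h x| ≤ C₀ * M) →
      (∀ h : ℝ, 0 < h → (∫ x in Ioo (0:ℝ) 1, |v x - K h x|) ≤ C₀ * h ^ (1 + s) * V) →
      (∀ h : ℝ, 0 < h →
        (∫ x in Ioo (0:ℝ) 1, (chiCut h α (deriv (K h) x)) ^ 6 *
            (((K h x) ^ 3 - x) ^ 2 - ((v x) ^ 3 - x) ^ 2))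
          ≤ C * h ^ (1 + s - 6 * α) * (1 + M) ^ 5 * V) ∧
      Tendsto (fun h => ∫ x in Ioo (0:ℝ) 1, (chiCut h α (deriv (K h) x)) ^ 6 *
            (((K h x) ^ 3 - x) ^ 2 - ((v x) ^ 3 - x) ^ 2))
        (nhdsWithin 0 (Ioi 0)) (nhds 0) := by
  refine ⟨C₀ * ((C₀^3+3)*(C₀^2+C₀+1)), by positivity, ?_⟩
  intro v K M V hvm hKm hM hV hvb hKb hL1
  -- The main estimate on the absolute value of the integral
  have main : ∀ h : ℝ, 0 < h →
      |∫ x in Ioo (0:ℝ) 1, (chiCut h α (deriv (K h) x)) ^ 6 *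
          (((K h x) ^ 3 - x) ^ 2 - ((v x) ^ 3 - x) ^ 2)|
        ≤ C₀ * ((C₀^3+3)*(C₀^2+C₀+1)) * h ^ (1 + s - 6 * α) * (1 + M) ^ 5 * V := by
    intro h hh
    set g : ℝ → ℝ := fun x => (chiCut h α (deriv (K h) x)) ^ 6 *
        (((K h x) ^ 3 - x) ^ 2 - ((v x) ^ 3 - x) ^ 2) with hg
    set B : ℝ := (h ^ (-α)) ^ 6 * ((C₀^3+3)*(C₀^2+C₀+1)*(1+M)^5) with hB
    have hBnn : 0 ≤ B := by
      have := Real.rpow_nonneg hh.le (-α)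
      positivity
    -- pointwise bound
    have hpt : ∀ x ∈ Ioo (0:ℝ) 1, |g x| ≤ B * |v x - K h x| := by
      intro x hx
      have hchi : |chiCut h α (deriv (K h) x)| ≤ h ^ (-α) := chiCut_abs_le _ _ _ hh
      have hchi6 : |(chiCut h α (deriv (K h) x)) ^ 6| ≤ (h ^ (-α)) ^ 6 := by
        rw [abs_pow]; gcongr
      have halg := key_alg C₀ M (K h x) (v x) x hM hC₀ hx.1 hx.2 (hvb x hx) (hKb h hh x hx)
      calc |g x| = |(chiCut h α (deriv (K h) x)) ^ 6| *
            |((K h x) ^ 3 - x) ^ 2 - ((v x) ^ 3 - x) ^ 2| := abs_mul _ _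
        _ ≤ (h ^ (-α)) ^ 6 * ((C₀^3+3)*(C₀^2+C₀+1)*(1+M)^5 * |v x - K h x|) :=
            mul_le_mul hchi6 halg (abs_nonneg _) (by positivity)
        _ = B * |v x - K h x| := by rw [hB]; ring
    -- integrability of the dominating function
    have hint : IntegrableOn (fun x => B * |v x - K h x|) (Ioo (0:ℝ) 1) := by
      apply Integrable.mono' (integrable_const (B * (M + C₀ * M)))
      · exact ((hvm.sub (hKm h hh)).abs.const_mul B).aestronglyMeasurable
      · filter_upwards [ae_restrict_mem measurableSet_Ioo] with x hx
        have h1 : |v x - K h x| ≤ M + C₀ * M := by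
          have := hvb x hx; have := hKb h hh x hx
          calc |v x - K h x| ≤ |v x| + |K h x| := abs_sub _ _
            _ ≤ M + C₀ * M := by linarith
        rw [Real.norm_eq_abs, abs_of_nonneg (by positivity)]
        exact mul_le_mul_of_nonneg_left h1 hBnn
    have step1 : |∫ x in Ioo (0:ℝ) 1, g x| ≤ ∫ x in Ioo (0:ℝ) 1, |g x| := by
      simpa using norm_integral_le_integral_norm (μ := volume.restrict (Ioo (0:ℝ) 1)) g
    have step2 : (∫ x in Ioo (0:ℝ) 1, |g x|) ≤ ∫ x in Ioo (0:ℝ) 1, B * |v x - K h x| := by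
      apply integral_mono_of_nonneg
      · filter_upwards with x using abs_nonneg _
      · exact hint
      · filter_upwards [ae_restrict_mem measurableSet_Ioo] with x hx using hpt x hx
    have step3 : (∫ x in Ioo (0:ℝ) 1, B * |v x - K h x|) = B * ∫ x in Ioo (0:ℝ) 1, |v x - K h x| :=
      integral_const_mul _ _
    have step4 : B * (∫ x in Ioo (0:ℝ) 1, |v x - K h x|) ≤ B * (C₀ * h ^ (1 + s) * V) :=
      mul_le_mul_of_nonneg_left (hL1 h hh) hBnn
    have hrw : B * (C₀ * h ^ (1 + s) * V)
        = C₀ * ((C₀^3+3)*(C₀^2+C₀+1)) * h ^ (1 + s - 6 * α) * (1 + M) ^ 5 * V := by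
      have hpow : (h ^ (-α)) ^ 6 * h ^ (1 + s) = h ^ (1 + s - 6 * α) := by
        rw [← Real.rpow_natCast (h ^ (-α)) 6, ← Real.rpow_mul hh.le, ← Real.rpow_add hh]
        congr 1
        push_cast
        ring
      rw [hB]
      calc (h ^ (-α)) ^ 6 * ((C₀^3+3)*(C₀^2+C₀+1)*(1+M)^5) * (C₀ * h ^ (1 + s) * V)
          = ((h ^ (-α)) ^ 6 * h ^ (1 + s)) * ((C₀^3+3)*(C₀^2+C₀+1)) * (1+M)^5 * V * C₀ := by ring
        _ = C₀ * ((C₀^3+3)*(C₀^2+C₀+1)) * h ^ (1 + s - 6 * α) * (1 + M) ^ 5 * V := by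
            rw [hpow]; ring
    calc |∫ x in Ioo (0:ℝ) 1, g x| ≤ B * (C₀ * h ^ (1 + s) * V) := by
          rw [← hrw] at *; linarith [step1, step2.trans_eq step3, step4]
      _ = _ := hrw
  constructor
  · intro h hh
    exact (le_abs_self _).trans (main h hh)
  · -- squeeze to zero
    have hexp : 0 < 1 + s - 6 * α := by linarith
    have htend : Tendsto (fun h : ℝ => C₀ * ((C₀^3+3)*(C₀^2+C₀+1)) * h ^ (1 + s - 6 * α) * (1 + M) ^ 5 * V)
        (nhdsWithin 0 (Ioi 0)) (nhds 0) := by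
      have h1 : Tendsto (fun h : ℝ => h ^ (1 + s - 6 * α)) (nhdsWithin 0 (Ioi 0)) (nhds 0) := by
        have : ContinuousAt (fun h : ℝ => h ^ (1 + s - 6 * α)) 0 :=
          Real.continuousAt_rpow_const 0 _ (Or.inr hexp.le)
        have h0 : (0:ℝ) ^ (1 + s - 6 * α) = 0 := Real.zero_rpow hexp.ne'
        have := this.tendsto
        rw [h0] at this
        exact this.mono_left nhdsWithin_le_nhds
      have := (h1.const_mul (C₀ * ((C₀^3+3)*(C₀^2+C₀+1)))).mul_const ((1 + M) ^ 5)
      have := this.mul_const V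
      simpa using this
    apply squeeze_zero_norm' _ htend
    filter_upwards [self_mem_nhdsWithin] with h hh
    exact main h hh
end
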